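/- arXiv:2112.11882 — 4 statements merged into one kernel-verified Lean document; each statement's English description precedes it below -/
import Mathlib

section
/- The cubic polynomial r(ξ) = ξ³ − 6ξ² + 5ξ − 1 has exactly the three real roots 1/(2cos(kπ/7))² for k = 1, 2, 3. -/
/-!
Since `sin 7θ = sin θ · U₆(cos θ)`, for `θ = kπ/7` with `k = 1, 2, 3` the cosine is a positive root
of the Chebyshev polynomial `U₆`, and `1 / (2 cos θ)²` is then a root of `r`. As `cos` decreases
on `(0, π/2)` these three roots are distinct, so they are all the roots of the cubic.
-/

open Real

/-- The coefficients are named after the elementary symmetric functions of the roots, which they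
turn out to be. -/
theorem cubic_eq_zero_iff_of_distinct_roots {R : Type*} [CommRing R] [IsDomain R]
    {s t u a b c : R} (hab : a ≠ b) (hac : a ≠ c) (hbc : b ≠ c)
    (ha : a ^ 3 - s * a ^ 2 + t * a - u = 0) (hb : b ^ 3 - s * b ^ 2 + t * b - u = 0)
    (hc : c ^ 3 - s * c ^ 2 + t * c - u = 0) (x : R) :
    x ^ 3 - s * x ^ 2 + t * x - u = 0 ↔ x = a ∨ x = b ∨ x = c := by
  have hab' : a ^ 2 + a * b + b ^ 2 - s * (a + b) + t = 0 :=
    (mul_eq_zero.mp (by linear_combination ha - hb : (a - b) * _ = 0)).resolve_left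
      (sub_ne_zero.mpr hab)
  have hac' : a ^ 2 + a * c + c ^ 2 - s * (a + c) + t = 0 :=
    (mul_eq_zero.mp (by linear_combination ha - hc : (a - c) * _ = 0)).resolve_left
      (sub_ne_zero.mpr hac)
  have hs : a + b + c - s = 0 :=
    (mul_eq_zero.mp (by linear_combination hab' - hac' : (b - c) * _ = 0)).resolve_left
      (sub_ne_zero.mpr hbc)
  have ht : a * b + a * c + b * c - t = 0 := by linear_combination (a + b) * hs - hab'
  have hu : a * b * c - u = 0 := by linear_combination ha - a ^ 2 * hs + a * ht
  have hfactor : x ^ 3 - s * x ^ 2 + t * x - u = (x - a) * (x - b) * (x - c) := by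
    linear_combination x ^ 2 * hs - x * ht + hu
  simp only [hfactor, mul_eq_zero, sub_eq_zero, or_assoc]

theorem sin_seven_mul (θ : ℝ) :
    sin (7 * θ) = sin θ * (64 * cos θ ^ 6 - 80 * cos θ ^ 4 + 24 * cos θ ^ 2 - 1) := by
  rw [show 7 * θ = θ + (θ + (θ + (θ + (θ + (θ + θ))))) by ring]
  simp only [sin_add, cos_add]
  linear_combination (-sin θ ^ 5 + 22 * sin θ ^ 3 * cos θ ^ 2 - sin θ ^ 3
    - 57 * sin θ * cos θ ^ 4 + 23 * sin θ * cos θ ^ 2 - sin θ) * sin_sq_add_cos_sq θ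

/-- With `y = 4 cos² θ` the second factor of `sin_seven_mul` is `y³ - 5y² + 6y - 1`, the reciprocal
polynomial of the cubic. -/
theorem cubic_root_of_sin_seven_mul_eq_zero {θ : ℝ} (h0 : 0 < θ) (hθ : θ < π / 2)
    (h7 : sin (7 * θ) = 0) :
    (1 / (2 * cos θ) ^ 2) ^ 3 - 6 * (1 / (2 * cos θ) ^ 2) ^ 2 + 5 * (1 / (2 * cos θ) ^ 2) - 1
      = 0 := by
  have hcos : cos θ ≠ 0 := (cos_pos_of_mem_Ioo ⟨by linarith, hθ⟩).ne'
  have hsin : sin θ ≠ 0 := (sin_pos_of_pos_of_lt_pi h0 (by linarith [pi_pos])).ne'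
  have hsextic : 64 * cos θ ^ 6 - 80 * cos θ ^ 4 + 24 * cos θ ^ 2 - 1 = 0 :=
    (mul_eq_zero.mp (sin_seven_mul θ ▸ h7)).resolve_left hsin
  field_simp
  linear_combination -hsextic

theorem one_div_two_mul_cos_sq_lt {θ φ : ℝ} (h0 : 0 ≤ θ) (hθφ : θ < φ) (hφ : φ < π / 2) :
    1 / (2 * cos θ) ^ 2 < 1 / (2 * cos φ) ^ 2 := by
  have hφpos : 0 < cos φ := cos_pos_of_mem_Ioo ⟨by linarith, hφ⟩
  have hlt : cos φ < cos θ := cos_lt_cos_of_nonneg_of_le_pi h0 (by linarith) hθφ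
  gcongr

theorem cubic_roots :
    (∀ x : ℝ, x ^ 3 - 6 * x ^ 2 + 5 * x - 1 = 0 ↔
      x = 1 / (2 * Real.cos (π / 7)) ^ 2 ∨
      x = 1 / (2 * Real.cos (2 * π / 7)) ^ 2 ∨
      x = 1 / (2 * Real.cos (3 * π / 7)) ^ 2) ∧
    1 / (2 * Real.cos (π / 7)) ^ 2 ≠ 1 / (2 * Real.cos (2 * π / 7)) ^ 2 ∧
    1 / (2 * Real.cos (π / 7)) ^ 2 ≠ 1 / (2 * Real.cos (3 * π / 7)) ^ 2 ∧
    1 / (2 * Real.cos (2 * π / 7)) ^ 2 ≠ 1 / (2 * Real.cos (3 * π / 7)) ^ 2 := by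
  have hπ := pi_pos
  have h1 := cubic_root_of_sin_seven_mul_eq_zero (θ := π / 7) (by positivity) (by linarith)
    (sin_eq_zero_iff.mpr ⟨1, by ring⟩)
  have h2 := cubic_root_of_sin_seven_mul_eq_zero (θ := 2 * π / 7) (by positivity) (by linarith)
    (sin_eq_zero_iff.mpr ⟨2, by push_cast; ring⟩)
  have h3 := cubic_root_of_sin_seven_mul_eq_zero (θ := 3 * π / 7) (by positivity) (by linarith)
    (sin_eq_zero_iff.mpr ⟨3, by push_cast; ring⟩)
  have h12 := one_div_two_mul_cos_sq_lt (θ := π / 7) (φ := 2 * π / 7) (by positivity)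
    (by linarith) (by linarith)
  have h23 := one_div_two_mul_cos_sq_lt (θ := 2 * π / 7) (φ := 3 * π / 7) (by positivity)
    (by linarith) (by linarith)
  have h13 := h12.trans h23
  exact ⟨cubic_eq_zero_iff_of_distinct_roots h12.ne h13.ne h23.ne h1 h2 h3, h12.ne, h13.ne,
    h23.ne⟩
end

section
/- For |q| < 1, ψ(q) := ∑_{n=0}^{∞} q^{n(n+1)/2} equals ∏_{k=0}^{∞} (1 − q^{2k+2}) / (1 − q^{2k+1}). -/
/-!
Jacobi's triple product with `q ↦ q²`, `z ↦ q` reads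
`ψ(q) = (q⁴; q⁴)_∞ (-q; q⁴)_∞ (-q³; q⁴)_∞ = (q⁴; q⁴)_∞ (-q; q²)_∞`, and since
`(q²; q²)_∞ = (q²; q⁴)_∞ (q⁴; q⁴)_∞ = (q; q²)_∞ (-q; q²)_∞ (q⁴; q⁴)_∞` this is the claimed product.

The triple product is the limit `m → ∞` of its finite form: the homogeneous q-binomial theorem
applied to `∏_{k<2m} (q^{4m} + q^{4k+1}) = q^{6m²-m} ∏_{k<m} (1 + q^{4k+1}) (1 + q^{4k+3})`, whose
terms of index `m - s` and `m + s + 1` carry `q^{6m²-m}` times `q^{s(2s+1)}` and `q^{(s+1)(2s+1)}`,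
the even and odd terms of `ψ`. The Gaussian binomials `[2m, m + s]_{q⁴}` tend to `1 / (q⁴; q⁴)_∞` and
are bounded by `1 / (|q|⁴; |q|⁴)_∞`, so Tannery's theorem passes to the limit.
-/

/-- Ramanujan's theta function `ψ(q) = ∑_{n ≥ 0} q^{n(n+1)/2}`. -/
noncomputable def psiC (q : ℂ) : ℂ := ∑' n : ℕ, q ^ (n * (n + 1) / 2)

open Finset Filter Topology

namespace Nat

lemma choose_two_succ (n : ℕ) : (n + 1).choose 2 = n.choose 2 + n := by
  simp [choose_succ_succ', add_comm]

lemma two_mul_choose_two_add (n : ℕ) : 2 * n.choose 2 + n = n * n := by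
  induction n with
  | zero => rfl
  | succ n ih => rw [choose_two_succ]; linarith

lemma sum_range_four_mul_add_one (m : ℕ) : ∑ k ∈ range m, (4 * k + 1) = 4 * m.choose 2 + m := by
  induction m with
  | zero => rfl
  | succ m ih => rw [sum_range_succ, ih, choose_two_succ]; ring

lemma four_mul_choose_two_sub {m s : ℕ} (hs : s ≤ m) :
    4 * (m - s).choose 2 + (m - s) + 4 * m * (2 * m - (m - s)) =
      4 * m.choose 2 + m + 4 * m * m + s * (2 * s + 1) := by
  obtain ⟨t, rfl⟩ := exists_add_of_le hs
  rw [show s + t - s = t by omega, show 2 * (s + t) - t = t + 2 * s by omega]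
  linarith [two_mul_choose_two_add t, two_mul_choose_two_add (s + t)]

lemma four_mul_choose_two_add {m s : ℕ} (hs : s < m) :
    4 * (m + 1 + s).choose 2 + (m + 1 + s) + 4 * m * (2 * m - (m + 1 + s)) =
      4 * m.choose 2 + m + 4 * m * m + (s + 1) * (2 * s + 1) := by
  obtain ⟨t, rfl⟩ : ∃ t, m = s + 1 + t := ⟨m - (s + 1), by omega⟩
  rw [show 2 * (s + 1 + t) - (s + 1 + t + 1 + s) = t by omega]
  linarith [two_mul_choose_two_add (s + 1 + t + 1 + s), two_mul_choose_two_add (s + 1 + t)]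

end Nat

section QBinomial

variable {R : Type*} [CommRing R]

-- `qPochhammer x n = (x; x)_n` and `qBinomial x m n = [m, n]_x`, which vanishes for `n > m`.
def qPochhammer (x : R) (n : ℕ) : R := ∏ i ∈ range n, (1 - x ^ (i + 1))

def qBinomial (x : R) : ℕ → ℕ → R
  | _, 0 => 1
  | 0, _ + 1 => 0
  | m + 1, n + 1 => x ^ (n + 1) * qBinomial x m (n + 1) + qBinomial x m n

variable (x : R)

lemma qPochhammer_succ (n : ℕ) : qPochhammer x (n + 1) = qPochhammer x n * (1 - x ^ (n + 1)) :=
  prod_range_succ _ _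

@[simp] lemma qBinomial_zero_right (m : ℕ) : qBinomial x m 0 = 1 := by cases m <;> rfl

lemma qBinomial_succ_succ (m n : ℕ) :
    qBinomial x (m + 1) (n + 1) = x ^ (n + 1) * qBinomial x m (n + 1) + qBinomial x m n := rfl

lemma qBinomial_eq_zero_of_lt : ∀ {m n : ℕ}, m < n → qBinomial x m n = 0
  | 0, _ + 1, _ => rfl
  | m + 1, n + 1, h => by
    rw [qBinomial_succ_succ, qBinomial_eq_zero_of_lt (by omega),
      qBinomial_eq_zero_of_lt (by omega), mul_zero, add_zero]

@[simp] lemma qBinomial_self : ∀ m, qBinomial x m m = 1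
  | 0 => rfl
  | m + 1 => by
    rw [qBinomial_succ_succ, qBinomial_eq_zero_of_lt x m.lt_succ_self, qBinomial_self m]; ring

lemma qBinomial_mul_qPochhammer : ∀ k l : ℕ,
    qBinomial x (k + l) k * qPochhammer x k * qPochhammer x l = qPochhammer x (k + l)
  | 0, l => by simp [qPochhammer]
  | k + 1, 0 => by simp [qPochhammer]
  | k + 1, l + 1 => by
    have h₁ := qBinomial_mul_qPochhammer (k + 1) l
    have h₂ := qBinomial_mul_qPochhammer k (l + 1)
    rw [show k + 1 + l = k + l + 1 by omega, qPochhammer_succ x k] at h₁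
    rw [show k + (l + 1) = k + l + 1 by omega, qPochhammer_succ x l] at h₂
    rw [show k + 1 + (l + 1) = k + l + 1 + 1 by omega, qBinomial_succ_succ,
      qPochhammer_succ x (k + l + 1), qPochhammer_succ x k, qPochhammer_succ x l]
    linear_combination x ^ (k + 1) * (1 - x ^ (l + 1)) * h₁ + (1 - x ^ (k + 1)) * h₂

lemma qBinomial_symm_add [IsDomain R] (hx : ∀ n, qPochhammer x n ≠ 0) (k l : ℕ) :
    qBinomial x (k + l) k = qBinomial x (k + l) l := by
  refine mul_right_cancel₀ (mul_ne_zero (hx k) (hx l)) ?_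
  rw [← mul_assoc, qBinomial_mul_qPochhammer, mul_comm (qPochhammer x k), ← mul_assoc, add_comm k l,
    qBinomial_mul_qPochhammer]

theorem prod_range_add_mul_pow_eq_sum (y z : R) (M : ℕ) :
    ∏ k ∈ range M, (y + z * x ^ k) =
      ∑ p ∈ antidiagonal M, qBinomial x M p.1 * x ^ p.1.choose 2 * z ^ p.1 * y ^ p.2 := by
  induction M generalizing z with
  | zero => simp
  | succ M ih =>
    set S := ∑ p ∈ antidiagonal M, qBinomial x M p.1 * x ^ p.1.choose 2 * (z * x) ^ p.1 * y ^ p.2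
    let g : ℕ × ℕ → R := fun p => x ^ p.1 * qBinomial x M p.1 * x ^ p.1.choose 2 * z ^ p.1 * y ^ p.2
    have hy : y * S = ∑ p ∈ antidiagonal (M + 1), g p := by
      rw [Nat.sum_antidiagonal_succ', mul_sum]
      simp only [g, qBinomial_eq_zero_of_lt x M.lt_succ_self, mul_zero, zero_mul, zero_add]
      exact sum_congr rfl fun p _ => by ring
    have hz : z * S = ∑ p ∈ antidiagonal M,
        qBinomial x M p.1 * x ^ (p.1 + 1).choose 2 * z ^ (p.1 + 1) * y ^ p.2 := by
      rw [mul_sum]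
      exact sum_congr rfl fun p _ => by rw [Nat.choose_two_succ]; ring
    have hshift : ∏ k ∈ range (M + 1), (y + z * x ^ k) =
        (∏ k ∈ range M, (y + (z * x) * x ^ k)) * (y + z) := by
      simp [prod_range_succ', pow_succ', mul_assoc]
    rw [hshift, ih, mul_add, mul_comm S y, mul_comm S z, hy, hz, Nat.sum_antidiagonal_succ,
      Nat.sum_antidiagonal_succ, add_assoc, ← sum_add_distrib]
    simp only [g, qBinomial_succ_succ, qBinomial_zero_right, pow_zero, one_mul, add_mul]

lemma prod_range_pow_add_mul_pow_eq_pow_mul_prod (q : R) (m : ℕ) :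
    ∏ k ∈ range (2 * m), (q ^ (4 * m) + q * (q ^ 4) ^ k) =
      q ^ (4 * m.choose 2 + m + 4 * m * m) *
        ∏ k ∈ range m, ((1 + q ^ (4 * k + 1)) * (1 + q ^ (4 * k + 3))) := by
  have hlow : ∏ k ∈ range m, (q ^ (4 * m) + q * (q ^ 4) ^ k) =
      q ^ (4 * m.choose 2 + m) * ∏ k ∈ range m, (1 + q ^ (4 * k + 3)) := by
    rw [← prod_range_reflect, ← Nat.sum_range_four_mul_add_one, ← prod_pow_eq_pow_sum,
      ← prod_range_reflect (fun k => q ^ (4 * k + 1)), ← prod_mul_distrib]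
    refine prod_congr rfl fun k hk => ?_
    obtain ⟨j, rfl⟩ : ∃ j, m = k + 1 + j := ⟨m - (k + 1), by simp at hk; omega⟩
    rw [show k + 1 + j - 1 - k = j by omega]
    ring
  have hhigh : ∏ k ∈ range m, (q ^ (4 * m) + q * (q ^ 4) ^ (m + k)) =
      q ^ (4 * m * m) * ∏ k ∈ range m, (1 + q ^ (4 * k + 1)) := by
    calc _ = ∏ k ∈ range m, (q ^ (4 * m) * (1 + q ^ (4 * k + 1))) :=
          prod_congr rfl fun k _ => by ring
      _ = _ := by rw [prod_mul_distrib, prod_const, card_range, ← pow_mul]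
  rw [two_mul, prod_range_add, hlow, hhigh, prod_mul_distrib]
  ring

lemma prod_range_pow_add_mul_pow_eq_sum (q : R) (m : ℕ) :
    ∏ k ∈ range (2 * m), (q ^ (4 * m) + q * (q ^ 4) ^ k) =
      ∑ i ∈ range (2 * m + 1),
        qBinomial (q ^ 4) (2 * m) i * q ^ (4 * i.choose 2 + i + 4 * m * (2 * m - i)) := by
  rw [prod_range_add_mul_pow_eq_sum, Nat.sum_antidiagonal_eq_sum_range_succ_mk]
  exact sum_congr rfl fun i _ => by ring

theorem prod_range_one_add_pow_eq_sum_qBinomial [IsDomain R] {q : R} (hq : q ≠ 0)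
    (hP : ∀ n, qPochhammer (q ^ 4) n ≠ 0) (m : ℕ) :
    ∏ k ∈ range m, ((1 + q ^ (4 * k + 1)) * (1 + q ^ (4 * k + 3))) =
      ∑ s ∈ range (m + 1), (qBinomial (q ^ 4) (2 * m) (m + s) * q ^ (s * (2 * s + 1)) +
        qBinomial (q ^ 4) (2 * m) (m + s + 1) * q ^ ((s + 1) * (2 * s + 1))) := by
  set E := 4 * m.choose 2 + m + 4 * m * m
  set f : ℕ → R := fun i =>
    qBinomial (q ^ 4) (2 * m) i * q ^ (4 * i.choose 2 + i + 4 * m * (2 * m - i))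
  have hlow : ∀ s ∈ range (m + 1),
      f (m - s) = q ^ E * (qBinomial (q ^ 4) (2 * m) (m + s) * q ^ (s * (2 * s + 1))) := by
    intro s hs
    have hs : s ≤ m := mem_range_succ_iff.mp hs
    have hsymm := qBinomial_symm_add (q ^ 4) hP (m - s) (m + s)
    rw [show m - s + (m + s) = 2 * m by omega] at hsymm
    simp only [f]
    rw [Nat.four_mul_choose_two_sub hs, hsymm, pow_add]
    ring
  have hhigh : ∀ s ∈ range m, f (m + 1 + s) =
      q ^ E * (qBinomial (q ^ 4) (2 * m) (m + s + 1) * q ^ ((s + 1) * (2 * s + 1))) := by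
    intro s hs
    simp only [f]
    rw [Nat.four_mul_choose_two_add (mem_range.mp hs), pow_add, show m + 1 + s = m + s + 1 by ring]
    ring
  refine mul_left_cancel₀ (pow_ne_zero E hq) ?_
  calc _ = ∑ i ∈ range (2 * m + 1), f i := by
        rw [← prod_range_pow_add_mul_pow_eq_pow_mul_prod, prod_range_pow_add_mul_pow_eq_sum]
    _ = ∑ s ∈ range (m + 1), f (m - s) + ∑ s ∈ range m, f (m + 1 + s) := by
        rw [show 2 * m + 1 = (m + 1) + m by omega, sum_range_add, ← sum_range_reflect,
          Nat.add_sub_cancel]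
    _ = _ := by
        rw [sum_congr rfl hlow, sum_congr rfl hhigh, ← mul_sum, ← mul_sum, ← mul_add,
          sum_add_distrib, sum_range_succ (fun s => qBinomial (q ^ 4) (2 * m) (m + s + 1) * _),
          qBinomial_eq_zero_of_lt (q ^ 4) (show 2 * m < m + m + 1 by omega), zero_mul, add_zero]

end QBinomial

section Analytic

variable {𝕜 : Type*} [NormedField 𝕜] {q : 𝕜}

lemma one_sub_pow_ne_zero (hq : ‖q‖ < 1) {n : ℕ} (hn : n ≠ 0) : 1 - q ^ n ≠ 0 := by
  rw [sub_ne_zero, ne_comm]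
  intro h
  have := congrArg norm h
  rw [norm_pow, norm_one] at this
  exact (pow_lt_one₀ (norm_nonneg q) hq hn).ne this

lemma summable_norm_pow_of_le (hq : ‖q‖ < 1) {e : ℕ → ℕ} (he : ∀ k, k ≤ e k) :
    Summable fun k => ‖q ^ e k‖ :=
  (summable_geometric_of_lt_one (norm_nonneg q) hq).of_nonneg_of_le (fun _ => norm_nonneg _)
    fun k => by rw [norm_pow]; exact pow_le_pow_of_le_one (norm_nonneg q) hq.le (he k)

lemma multipliable_one_add_pow [CompleteSpace 𝕜] (hq : ‖q‖ < 1) {e : ℕ → ℕ}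
    (he : ∀ k, k ≤ e k) : Multipliable fun k => 1 + q ^ e k :=
  multipliable_one_add_of_summable (summable_norm_pow_of_le hq he)

lemma multipliable_one_sub_pow [CompleteSpace 𝕜] (hq : ‖q‖ < 1) {e : ℕ → ℕ}
    (he : ∀ k, k ≤ e k) : Multipliable fun k => 1 - q ^ e k := by
  simpa [sub_eq_add_neg] using multipliable_one_add_of_summable (f := fun k => -q ^ e k)
    (by simpa using summable_norm_pow_of_le hq he)

lemma tprod_one_sub_pow_ne_zero [CompleteSpace 𝕜] (hq : ‖q‖ < 1) {e : ℕ → ℕ}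
    (he : ∀ k, k < e k) : ∏' k, (1 - q ^ e k) ≠ 0 := by
  simpa [sub_eq_add_neg] using tprod_one_add_ne_zero_of_summable (f := fun k => -q ^ e k)
    (fun k => by simpa [sub_eq_add_neg] using one_sub_pow_ne_zero hq (he k).ne_bot)
    (by simpa using summable_norm_pow_of_le hq fun k => (he k).le)

lemma qPochhammer_ne_zero (hq : ‖q‖ < 1) (n : ℕ) : qPochhammer q n ≠ 0 :=
  prod_ne_zero_iff.mpr fun i _ => one_sub_pow_ne_zero hq i.succ_ne_zero

lemma tendsto_qPochhammer [CompleteSpace 𝕜] (hq : ‖q‖ < 1) :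
    Tendsto (qPochhammer q) atTop (𝓝 (∏' i, (1 - q ^ (i + 1)))) :=
  (multipliable_one_sub_pow hq fun k => k.le_succ).hasProd.tendsto_prod_nat

lemma tendsto_qBinomial [CompleteSpace 𝕜] (hq : ‖q‖ < 1) {k l : ℕ → ℕ}
    (hk : Tendsto k atTop atTop) (hl : Tendsto l atTop atTop) :
    Tendsto (fun m => qBinomial q (k m + l m) (k m)) atTop (𝓝 (∏' i, (1 - q ^ (i + 1)))⁻¹) := by
  have hP := tendsto_qPochhammer hq
  have hne := tprod_one_sub_pow_ne_zero hq fun i => i.lt_succ_self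
  have h := (hP.comp (hk.atTop_add_atTop hl)).div ((hP.comp hk).mul (hP.comp hl))
    (mul_ne_zero hne hne)
  convert h using 2 with m
  · refine eq_div_of_mul_eq (mul_ne_zero (qPochhammer_ne_zero hq _) (qPochhammer_ne_zero hq _)) ?_
    rw [← mul_assoc]
    exact qBinomial_mul_qPochhammer q _ _
  · field_simp

lemma tendsto_qBinomial_two_mul [CompleteSpace 𝕜] (hq : ‖q‖ < 1) (a : ℕ) :
    Tendsto (fun m => qBinomial q (2 * m) (m + a)) atTop (𝓝 (∏' i, (1 - q ^ (i + 1)))⁻¹) := by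
  refine (tendsto_qBinomial hq (tendsto_add_atTop_nat a) (tendsto_sub_atTop_nat a)).congr' ?_
  filter_upwards [eventually_ge_atTop a] with m hm
  rw [show m + a + (m - a) = 2 * m by omega]

lemma norm_qBinomial_le (x : 𝕜) : ∀ m n, ‖qBinomial x m n‖ ≤ qBinomial ‖x‖ m n
  | _, 0 => by simp
  | 0, _ + 1 => by simp [qBinomial]
  | m + 1, n + 1 => by
    rw [qBinomial_succ_succ, qBinomial_succ_succ]
    refine (norm_add_le _ _).trans (add_le_add ?_ (norm_qBinomial_le x m n))
    rw [norm_mul, norm_pow]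
    exact mul_le_mul_of_nonneg_left (norm_qBinomial_le x m (n + 1)) (by positivity)

end Analytic

section Real

variable {x : ℝ}

lemma qPochhammer_pos (h0 : 0 ≤ x) (h1 : x < 1) (n : ℕ) : 0 < qPochhammer x n :=
  prod_pos fun i _ => sub_pos.mpr (pow_lt_one₀ h0 h1 i.succ_ne_zero)

lemma qBinomial_le_inv_qPochhammer (h0 : 0 ≤ x) (h1 : x < 1) :
    ∀ m n, qBinomial x m n ≤ (qPochhammer x n)⁻¹
  | _, 0 => by simp [qPochhammer]
  | 0, n + 1 => by simpa [qBinomial] using (qPochhammer_pos h0 h1 (n + 1)).le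
  | m + 1, n + 1 => by
    have hn := qPochhammer_pos h0 h1 n
    have hx : 0 < 1 - x ^ (n + 1) := sub_pos.mpr (pow_lt_one₀ h0 h1 n.succ_ne_zero)
    rw [qBinomial_succ_succ]
    calc _ ≤ x ^ (n + 1) * (qPochhammer x (n + 1))⁻¹ + (qPochhammer x n)⁻¹ :=
          add_le_add (mul_le_mul_of_nonneg_left (qBinomial_le_inv_qPochhammer h0 h1 m (n + 1))
            (by positivity)) (qBinomial_le_inv_qPochhammer h0 h1 m n)
      _ = _ := by rw [qPochhammer_succ]; field_simp; ring

lemma tprod_le_qPochhammer (h0 : 0 ≤ x) (h1 : x < 1) (n : ℕ) :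
    ∏' i, (1 - x ^ (i + 1)) ≤ qPochhammer x n := by
  refine Antitone.le_of_tendsto (antitone_nat_of_succ_le fun n => ?_)
    (tendsto_qPochhammer (by rwa [Real.norm_of_nonneg h0])) n
  rw [qPochhammer_succ]
  exact mul_le_of_le_one_right (qPochhammer_pos h0 h1 n).le (by linarith [pow_nonneg h0 (n + 1)])

lemma tprod_one_sub_pow_pos (h0 : 0 ≤ x) (h1 : x < 1) : 0 < ∏' i, (1 - x ^ (i + 1)) :=
  lt_of_le_of_ne (tprod_nonneg fun i => (sub_pos.mpr (pow_lt_one₀ h0 h1 i.succ_ne_zero)).le)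
    (tprod_one_sub_pow_ne_zero (by rwa [Real.norm_of_nonneg h0]) fun i => i.lt_succ_self).symm

end Real

lemma norm_qBinomial_le_inv_tprod {𝕜 : Type*} [NormedField 𝕜] {x : 𝕜} (hx : ‖x‖ < 1) (m n : ℕ) :
    ‖qBinomial x m n‖ ≤ (∏' i, (1 - ‖x‖ ^ (i + 1)))⁻¹ :=
  (norm_qBinomial_le x m n).trans <| (qBinomial_le_inv_qPochhammer (norm_nonneg x) hx m n).trans <|
    inv_anti₀ (tprod_one_sub_pow_pos (norm_nonneg x) hx) (tprod_le_qPochhammer (norm_nonneg x) hx n)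

section Gauss

variable {𝕜 : Type*} [NormedField 𝕜] [CompleteSpace 𝕜] {q : 𝕜}

theorem tsum_pow_add_pow_eq_tprod (hq : ‖q‖ < 1) (hq0 : q ≠ 0) :
    ∑' s, (q ^ (s * (2 * s + 1)) + q ^ ((s + 1) * (2 * s + 1))) =
      (∏' i, (1 - (q ^ 4) ^ (i + 1))) * ∏' k, ((1 + q ^ (4 * k + 1)) * (1 + q ^ (4 * k + 3))) := by
  have hx : ‖q ^ 4‖ < 1 := by rw [norm_pow]; exact pow_lt_one₀ (norm_nonneg q) hq (by norm_num)
  set P := ∏' i, (1 - (q ^ 4) ^ (i + 1))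
  have hP : P ≠ 0 := tprod_one_sub_pow_ne_zero hx fun i => i.lt_succ_self
  let F : ℕ → ℕ → 𝕜 := fun m s => qBinomial (q ^ 4) (2 * m) (m + s) * q ^ (s * (2 * s + 1)) +
    qBinomial (q ^ 4) (2 * m) (m + s + 1) * q ^ ((s + 1) * (2 * s + 1))
  have hfin : ∀ m, ∑' s, F m s =
      ∏ k ∈ range m, ((1 + q ^ (4 * k + 1)) * (1 + q ^ (4 * k + 3))) := by
    intro m
    rw [prod_range_one_add_pow_eq_sum_qBinomial hq0 (qPochhammer_ne_zero hx) m]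
    refine tsum_eq_sum fun s hs => ?_
    rw [mem_range, not_lt] at hs
    simp only [F, qBinomial_eq_zero_of_lt _ (show 2 * m < m + s by omega),
      qBinomial_eq_zero_of_lt _ (show 2 * m < m + s + 1 by omega), zero_mul, add_zero]
  have hlim : Tendsto (fun m => ∑' s, F m s) atTop
      (𝓝 (∑' s, P⁻¹ * (q ^ (s * (2 * s + 1)) + q ^ ((s + 1) * (2 * s + 1))))) := by
    refine tendsto_tsum_of_dominated_convergence (bound := fun s =>
      (∏' i, (1 - ‖q ^ 4‖ ^ (i + 1)))⁻¹ * (‖q ^ (s * (2 * s + 1))‖ + ‖q ^ ((s + 1) * (2 * s + 1))‖))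
      ?_ (fun s => ?_) (Eventually.of_forall fun m s => ?_)
    · exact ((summable_norm_pow_of_le hq fun s => by nlinarith).add
        (summable_norm_pow_of_le hq fun s => by nlinarith)).mul_left _
    · rw [mul_add]
      exact ((tendsto_qBinomial_two_mul hx s).mul_const _).add
        ((tendsto_qBinomial_two_mul hx (s + 1)).mul_const _)
    · rw [mul_add]
      refine (norm_add_le _ _).trans (add_le_add ?_ ?_) <;> rw [norm_mul] <;>
        exact mul_le_mul_of_nonneg_right (norm_qBinomial_le_inv_tprod hx _ _) (norm_nonneg _)
  have hprod : Tendsto (fun m => ∏ k ∈ range m, ((1 + q ^ (4 * k + 1)) * (1 + q ^ (4 * k + 3))))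
      atTop (𝓝 (∏' k, ((1 + q ^ (4 * k + 1)) * (1 + q ^ (4 * k + 3))))) :=
    ((multipliable_one_add_pow hq fun k => by omega).mul
      (multipliable_one_add_pow hq fun k => by omega)).hasProd.tendsto_prod_nat
  have h := tendsto_nhds_unique (hlim.congr hfin) hprod
  rw [tsum_mul_left] at h
  rw [← h, ← mul_assoc, mul_inv_cancel₀ hP, one_mul]

theorem tsum_pow_triangle_eq_tsum_even_add_odd (hq : ‖q‖ < 1) :
    ∑' n, q ^ (n * (n + 1) / 2) = ∑' s, (q ^ (s * (2 * s + 1)) + q ^ ((s + 1) * (2 * s + 1))) := by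
  have heven : ∀ s, 2 * s * (2 * s + 1) / 2 = s * (2 * s + 1) := fun s => by
    rw [mul_assoc, Nat.mul_div_cancel_left _ two_pos]
  have hodd : ∀ s, (2 * s + 1) * (2 * s + 1 + 1) / 2 = (s + 1) * (2 * s + 1) := fun s => by
    rw [show (2 * s + 1) * (2 * s + 1 + 1) = 2 * ((s + 1) * (2 * s + 1)) by ring,
      Nat.mul_div_cancel_left _ two_pos]
  have h₁ := (summable_norm_pow_of_le hq fun s => show s ≤ s * (2 * s + 1) by nlinarith).of_norm
  have h₂ :=
    (summable_norm_pow_of_le hq fun s => show s ≤ (s + 1) * (2 * s + 1) by nlinarith).of_norm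
  rw [← tsum_even_add_odd (by simpa only [heven] using h₁) (by simpa only [hodd] using h₂)]
  simp only [heven, hodd]
  exact (h₁.tsum_add h₂).symm

theorem tprod_one_sub_pow_div_eq (hq : ‖q‖ < 1) :
    ∏' k, (1 - q ^ (2 * k + 2)) / (1 - q ^ (2 * k + 1)) =
      (∏' i, (1 - (q ^ 4) ^ (i + 1))) * ∏' k, ((1 + q ^ (4 * k + 1)) * (1 + q ^ (4 * k + 3))) := by
  have hodd := multipliable_one_sub_pow hq (e := fun k => 2 * k + 1) fun k => by omega
  have hne := tprod_one_sub_pow_ne_zero hq (e := fun k => 2 * k + 1) fun k => by omega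
  have hnum : ∏' k, (1 - q ^ (2 * k + 2)) = (∏' k, (1 - q ^ (2 * k + 1))) *
      (∏' k, (1 + q ^ (2 * k + 1))) * ∏' i, (1 - (q ^ 4) ^ (i + 1)) := by
    rw [← tprod_even_mul_odd (f := fun k => 1 - q ^ (2 * k + 2))
      (multipliable_one_sub_pow hq fun k => by omega) (multipliable_one_sub_pow hq fun k => by omega),
      ← hodd.tprod_mul (multipliable_one_add_pow hq fun k => by omega)]
    congr 1 <;> exact tprod_congr fun k => by ring
  have hplus : ∏' k, (1 + q ^ (2 * k + 1)) =
      ∏' k, ((1 + q ^ (4 * k + 1)) * (1 + q ^ (4 * k + 3))) := by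
    rw [Multipliable.tprod_mul (multipliable_one_add_pow hq fun k => by omega)
      (multipliable_one_add_pow hq fun k => by omega),
      ← tprod_even_mul_odd (f := fun k => 1 + q ^ (2 * k + 1))
      (multipliable_one_add_pow hq fun k => by omega) (multipliable_one_add_pow hq fun k => by omega)]
    congr 1 <;> exact tprod_congr fun k => by ring
  rw [(multipliable_one_sub_pow hq fun k => by omega).tprod_div₀ hodd hne, hnum, hplus]
  field_simp

end Gauss

theorem psi_product (q : ℂ) (hq : ‖q‖ < 1) :
    psiC q = ∏' k : ℕ, (1 - q ^ (2 * k + 2)) / (1 - q ^ (2 * k + 1)) := by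
  rw [psiC, tsum_pow_triangle_eq_tsum_even_add_odd hq, tprod_one_sub_pow_div_eq hq]
  rcases eq_or_ne q 0 with rfl | hq0
  · rw [tsum_eq_single 0 fun s hs => by simp [hs]]
    simp
  · exact tsum_pow_add_pow_eq_tprod hq hq0
end

section
/- For |q| < 1, f(−q) := ∑_{n=-∞}^{∞} (−1)^n q^{n(3n−1)/2} equals the infinite product ∏_{k=1}^{∞} (1 − q^k). -/
/-!
Mathlib's `Pentagonal.tprod_one_sub_pow` derives Euler's identity in any topological ring from
Euler's recursion `A_k = 1 - x^(2k+3) - x^(3k+5) A_(k+1)` for the series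
`A_k = ∑ₙ x^((k+1)n) ∏_{i ≤ n} (1 - x^(k+i+1))`, provided these series and the products converge
and the error term `± x^((k+1)(3k+4)/2) A_k` tends to zero. When `‖x‖ < 1` in a complete normed
ring, everything follows from one uniform estimate: every finite product of factors
`1 - x^(k+i+1)` has norm at most `exp (1 - ‖x‖)⁻¹`, so `‖A_k‖ ≤ exp (1 - ‖x‖)⁻¹ / (1 - ‖x‖)`,
while the pentagonal exponents grow at least linearly. Over a field, the resulting sum of
pentagonal pairs `(-1)^k (x^p(-k) - x^p(k+1))` unfolds into the bilateral series.
-/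

/-- Ramanujan's theta function `f(-q) = ∑_{n ∈ ℤ} (-1)^n q^{n(3n-1)/2}`. -/
noncomputable def fC (q : ℂ) : ℂ := ∑' n : ℤ, (-1 : ℂ) ^ n * q ^ (n * (3 * n - 1) / 2).toNat

open Filter Topology Finset

theorem natAbs_le_pentagonal (n : ℤ) : n.natAbs ≤ pentagonal n := by
  have h := two_mul_natCast_pentagonal n
  zify
  rcases le_or_gt 0 n with hn | hn
  · rw [abs_of_nonneg hn]; nlinarith
  · rw [abs_of_neg hn]; nlinarith

section NormedCommRing

variable {R : Type*} [NormedCommRing R] [NormOneClass R] {x : R}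

theorem norm_pow_le_pow_of_le (hx : ‖x‖ < 1) {m n : ℕ} (h : m ≤ n) : ‖x ^ n‖ ≤ ‖x‖ ^ m :=
  (norm_pow_le x n).trans (pow_le_pow_of_le_one (norm_nonneg x) hx.le h)

theorem norm_prod_range_one_sub_pow_le (hx : ‖x‖ < 1) (k n : ℕ) :
    ‖∏ i ∈ range n, (1 - x ^ (k + i + 1))‖ ≤ Real.exp (1 - ‖x‖)⁻¹ := by
  have hsum : ∑ i ∈ range n, ‖-x ^ (k + i + 1)‖ ≤ (1 - ‖x‖)⁻¹ := by
    rw [← tsum_geometric_of_lt_one (norm_nonneg x) hx]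
    calc ∑ i ∈ range n, ‖-x ^ (k + i + 1)‖ ≤ ∑ i ∈ range n, ‖x‖ ^ i :=
          sum_le_sum fun i _ => norm_neg (x ^ _) ▸ norm_pow_le_pow_of_le hx (by omega)
      _ ≤ ∑' i, ‖x‖ ^ i :=
          (summable_geometric_of_lt_one (norm_nonneg x) hx).sum_le_tsum _ fun i _ => by positivity
  have hprod := (range n).norm_prod_one_add_sub_one_le fun i => -x ^ (k + i + 1)
  simp only [← sub_eq_add_neg] at hprod
  calc ‖∏ i ∈ range n, (1 - x ^ (k + i + 1))‖
      ≤ ‖∏ i ∈ range n, (1 - x ^ (k + i + 1)) - 1‖ + ‖(1 : R)‖ := norm_le_norm_sub_add _ _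
    _ ≤ Real.exp (∑ i ∈ range n, ‖-x ^ (k + i + 1)‖) := by rw [norm_one]; linarith
    _ ≤ Real.exp (1 - ‖x‖)⁻¹ := Real.exp_le_exp.2 hsum

theorem norm_pow_mul_prod_one_sub_pow_le (hx : ‖x‖ < 1) (k n : ℕ) :
    ‖x ^ ((k + 1) * n) * ∏ i ∈ range (n + 1), (1 - x ^ (k + i + 1))‖ ≤
      Real.exp (1 - ‖x‖)⁻¹ * ‖x‖ ^ n :=
  (norm_mul_le _ _).trans <| by
    rw [mul_comm]
    exact mul_le_mul (norm_prod_range_one_sub_pow_le hx k _)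
      (norm_pow_le_pow_of_le hx (Nat.le_mul_of_pos_left n k.succ_pos)) (norm_nonneg _)
      (by positivity)

theorem norm_tsum_pow_mul_prod_one_sub_pow_le (hx : ‖x‖ < 1) (k : ℕ) :
    ‖∑' n, x ^ ((k + 1) * n) * ∏ i ∈ range (n + 1), (1 - x ^ (k + i + 1))‖ ≤
      Real.exp (1 - ‖x‖)⁻¹ * (1 - ‖x‖)⁻¹ :=
  tsum_of_norm_bounded ((hasSum_geometric_of_lt_one (norm_nonneg x) hx).mul_left _)
    (norm_pow_mul_prod_one_sub_pow_le hx k)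

theorem tendsto_pentagonal_remainder (hx : ‖x‖ < 1) :
    Tendsto (fun k => (-1) ^ (k + 1) * x ^ ((k + 1) * (3 * k + 4) / 2) *
      ∑' n, x ^ ((k + 1) * n) * ∏ i ∈ range (n + 1), (1 - x ^ (k + i + 1))) atTop (𝓝 0) := by
  refine squeeze_zero_norm (fun k => ?_) <| by
    simpa using (tendsto_pow_atTop_nhds_zero_of_lt_one (norm_nonneg x) hx).mul_const
      (Real.exp (1 - ‖x‖)⁻¹ * (1 - ‖x‖)⁻¹)
  have hk : k ≤ (k + 1) * (3 * k + 4) / 2 := by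
    rw [Nat.le_div_iff_mul_le two_pos]; nlinarith
  calc _ ≤ ‖(-1 : R) ^ (k + 1)‖ * ‖x ^ ((k + 1) * (3 * k + 4) / 2)‖ *
        ‖∑' n, x ^ ((k + 1) * n) * ∏ i ∈ range (n + 1), (1 - x ^ (k + i + 1))‖ :=
        (norm_mul_le _ _).trans (by gcongr; exact norm_mul_le _ _)
    _ ≤ 1 * ‖x‖ ^ k * (Real.exp (1 - ‖x‖)⁻¹ * (1 - ‖x‖)⁻¹) := by
        gcongr
        · simpa using norm_pow_le (-1 : R) (k + 1)
        · exact norm_pow_le_pow_of_le hx hk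
        · exact norm_tsum_pow_mul_prod_one_sub_pow_le hx k
    _ = _ := by ring

variable [CompleteSpace R]

theorem summable_pow_mul_prod_one_sub_pow (hx : ‖x‖ < 1) (k : ℕ) :
    Summable fun n => x ^ ((k + 1) * n) * ∏ i ∈ range (n + 1), (1 - x ^ (k + i + 1)) :=
  .of_norm_bounded ((summable_geometric_of_lt_one (norm_nonneg x) hx).mul_left _)
    (norm_pow_mul_prod_one_sub_pow_le hx k)

theorem multipliable_one_sub_pow_add (hx : ‖x‖ < 1) (k : ℕ) :
    Multipliable fun n => 1 - x ^ (n + k + 1) := by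
  simp only [sub_eq_add_neg]
  refine multipliable_one_add_of_summable <|
    (summable_geometric_of_lt_one (norm_nonneg x) hx).of_nonneg_of_le (fun _ => norm_nonneg _)
      fun n => ?_
  rw [norm_neg]
  exact norm_pow_le_pow_of_le hx (by omega)

theorem summable_neg_one_pow_mul_pow_pentagonal_sub (hx : ‖x‖ < 1) :
    Summable fun k : ℕ => (-1) ^ k * (x ^ pentagonal (-k) - x ^ pentagonal (k + 1)) := by
  refine .of_norm_bounded ((summable_geometric_of_lt_one (norm_nonneg x) hx).mul_left 2)
    fun k => ?_
  have h₁ : k ≤ pentagonal (-k) := by simpa using natAbs_le_pentagonal (-k)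
  have h₂ : k ≤ pentagonal (k + 1) := by
    have := natAbs_le_pentagonal (k + 1); omega
  calc ‖(-1) ^ k * (x ^ pentagonal (-k) - x ^ pentagonal (k + 1))‖
      ≤ ‖(-1 : R) ^ k‖ * (‖x ^ pentagonal (-k)‖ + ‖x ^ pentagonal (k + 1)‖) :=
        (norm_mul_le _ _).trans (by gcongr; exact norm_sub_le _ _)
    _ ≤ 1 * (‖x‖ ^ k + ‖x‖ ^ k) := by
        gcongr
        · simpa using norm_pow_le (-1 : R) k
        · exact norm_pow_le_pow_of_le hx h₁
        · exact norm_pow_le_pow_of_le hx h₂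
    _ = 2 * ‖x‖ ^ k := by ring

theorem tprod_one_sub_pow_eq_tsum_nat (hx : ‖x‖ < 1) :
    ∏' n, (1 - x ^ (n + 1)) =
      ∑' k : ℕ, (-1) ^ k * (x ^ pentagonal (-k) - x ^ pentagonal (k + 1)) :=
  Pentagonal.tprod_one_sub_pow (tendsto_pow_atTop_nhds_zero_of_norm_lt_one hx)
    (summable_pow_mul_prod_one_sub_pow hx) (multipliable_one_sub_pow_add hx)
    (summable_neg_one_pow_mul_pow_pentagonal_sub hx) (tendsto_pentagonal_remainder hx)

end NormedCommRing

section NormedField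

variable {𝕜 : Type*} [NormedField 𝕜] [CompleteSpace 𝕜] {x : 𝕜}

theorem hasSum_neg_one_zpow_mul_pow_pentagonal (hx : ‖x‖ < 1) :
    HasSum (fun n : ℤ => (-1) ^ n * x ^ pentagonal n)
      (∑' k : ℕ, (-1) ^ k * (x ^ pentagonal (-k) - x ^ pentagonal (k + 1))) := by
  set f : ℤ → 𝕜 := fun n => (-1) ^ n * x ^ pentagonal n
  have hnorm (n : ℤ) : ‖f n‖ ≤ ‖x‖ ^ n.natAbs := by
    simpa [f] using norm_pow_le_pow_of_le hx (natAbs_le_pentagonal n)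
  have hgeom := summable_geometric_of_lt_one (norm_nonneg x) hx
  have hsummable : Summable fun n => f (-n) := by
    refine .of_nat_of_neg_add_one (.of_norm_bounded hgeom fun k => ?_)
      (.of_norm_bounded hgeom fun k => ?_)
    · simpa using hnorm (-k)
    · exact (hnorm _).trans (pow_le_pow_of_le_one (norm_nonneg x) hx.le (by omega))
  rw [← (Equiv.neg ℤ).hasSum_iff]
  convert hsummable.hasSum using 1
  · rfl
  rw [← tsum_nat_add_neg_add_one hsummable]
  refine tsum_congr fun k => ?_
  simp only [f, neg_neg, zpow_neg, ← Nat.cast_add_one, zpow_natCast, ← inv_pow, inv_neg, inv_one]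
  ring

end NormedField

theorem pentagonal_product (q : ℂ) (hq : ‖q‖ < 1) :
    fC q = ∏' k : ℕ, (1 - q ^ (k + 1)) := by
  rw [tprod_one_sub_pow_eq_tsum_nat hq]
  exact (hasSum_neg_one_zpow_mul_pow_pentagonal hq).tsum_eq
end

section
/- φ⁴(e^{−π/√7}) / φ⁴(e^{−π√7}) = 7, where φ(q) = ∑_{n ∈ ℤ} q^{n²}. -/
open Real

/-- Ramanujan's theta function `φ(q) = ∑_{n ∈ ℤ} q^{n²}`. -/
noncomputable def phi (q : ℝ) : ℝ := ∑' n : ℤ, q ^ (n.natAbs ^ 2)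

open Complex in
lemma summable_theta_term {t : ℝ} (ht : 0 < t) :
    Summable (fun n : ℤ => Complex.exp (π * I * (n : ℂ) ^ 2 * (t * I))) := by
  have h := (summable_jacobiTheta₂_term_iff 0 (t * I)).mpr (by simp [ht])
  simpa [jacobiTheta₂_term] using h

open Complex in
lemma theta_term_cast (t : ℝ) (n : ℤ) :
    (π : ℂ) * I * (n : ℂ) ^ 2 * ((t : ℂ) * I) = ((-π * t * (n.natAbs ^ 2 : ℕ) : ℝ) : ℂ) := by
  have hr : ((n.natAbs ^ 2 : ℕ) : ℝ) = (n : ℝ) ^ 2 := by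
    push_cast [Nat.cast_natAbs]
    exact sq_abs _
  rw [Complex.ofReal_mul, hr]
  push_cast
  ring_nf
  rw [Complex.I_sq]
  ring

open Complex in
lemma phi_eq_theta {t : ℝ} (ht : 0 < t) :
    phi (Real.exp (-π * t)) = (jacobiTheta (t * I)).re := by
  rw [jacobiTheta, Complex.re_tsum (summable_theta_term ht), phi]
  congr 1
  funext n
  rw [theta_term_cast t n, ← Complex.ofReal_exp, Complex.ofReal_re,
    mul_comm (-π * t) ((n.natAbs ^ 2 : ℕ) : ℝ), Real.exp_nat_mul]

lemma phi_pos {t : ℝ} (ht : 0 < t) : 0 < phi (Real.exp (-π * t)) := by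
  have hsum : Summable (fun n : ℤ => Real.exp (-π * t) ^ (n.natAbs ^ 2)) := by
    have := (summable_theta_term ht).norm
    apply this.of_nonneg_of_le (fun n => by positivity)
    intro n
    rw [theta_term_cast t n, ← Complex.ofReal_exp, Complex.norm_real, Real.norm_eq_abs,
      abs_of_pos (Real.exp_pos _), mul_comm (-π * t) ((n.natAbs ^ 2 : ℕ) : ℝ), Real.exp_nat_mul]
  have h0 : (0:ℝ) < Real.exp (-π * t) ^ ((0:ℤ).natAbs ^ 2) := by positivity
  calc (0:ℝ) < Real.exp (-π * t) ^ ((0:ℤ).natAbs ^ 2) := h0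
    _ ≤ phi (Real.exp (-π * t)) := Summable.le_tsum hsum 0 (fun n _ => by positivity)

theorem phi_quotient_sqrt7 :
    phi (Real.exp (-π / Real.sqrt 7)) ^ 4 / phi (Real.exp (-π * Real.sqrt 7)) ^ 4 = 7 := by
  have h7 : (0:ℝ) < Real.sqrt 7 := Real.sqrt_pos.mpr (by norm_num)
  have h7c : ((Real.sqrt 7 : ℝ) : ℂ) ≠ 0 := by exact_mod_cast h7.ne'
  have h7' : (0:ℝ) < (Real.sqrt 7)⁻¹ := by positivity
  set τ : UpperHalfPlane := UpperHalfPlane.mk ((Real.sqrt 7 : ℝ) * Complex.I)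
    (by simp [h7]) with hτ
  have hS := jacobiTheta_S_smul τ
  have hcoe : (τ : ℂ) = (Real.sqrt 7 : ℝ) * Complex.I := rfl
  have hScoe : ((ModularGroup.S • τ : UpperHalfPlane) : ℂ)
      = (((Real.sqrt 7)⁻¹ : ℝ) : ℂ) * Complex.I := by
    rw [UpperHalfPlane.modular_S_smul, UpperHalfPlane.coe_mk, hcoe]
    have h : (-(((Real.sqrt 7 : ℝ):ℂ) * Complex.I))
        = ((((Real.sqrt 7)⁻¹ : ℝ):ℂ) * Complex.I)⁻¹ := by
      rw [mul_inv, Complex.inv_I]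
      push_cast
      rw [inv_inv]
      ring
    rw [h, inv_inv]
  have hfac : (-Complex.I * (τ : ℂ)) ^ ((1:ℂ)/2)
      = (((Real.sqrt 7 ^ ((1:ℝ)/2) : ℝ)) : ℂ) := by
    have h1 : (-Complex.I * (τ : ℂ)) = ((Real.sqrt 7 : ℝ) : ℂ) := by
      rw [hcoe]
      have := Complex.I_mul_I
      ring_nf
      rw [Complex.I_sq]
      ring
    rw [h1, show ((1:ℂ)/2) = (((1:ℝ)/2 : ℝ) : ℂ) by push_cast; ring,
      ← Complex.ofReal_cpow (Real.sqrt_nonneg 7)]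
  set c : ℝ := Real.sqrt 7 ^ ((1:ℝ)/2) with hc
  have hkey : phi (Real.exp (-π * (Real.sqrt 7)⁻¹)) = c * phi (Real.exp (-π * Real.sqrt 7)) := by
    rw [phi_eq_theta h7', phi_eq_theta h7]
    have : ((Real.sqrt 7)⁻¹ : ℝ) * Complex.I = ((ModularGroup.S • τ : UpperHalfPlane) : ℂ) := by
      rw [hScoe]
    rw [this, hS, hfac, ← hcoe]
    simp [Complex.re_ofReal_mul]
  have hdiv : -π / Real.sqrt 7 = -π * (Real.sqrt 7)⁻¹ := by ring
  have hA : 0 < phi (Real.exp (-π * Real.sqrt 7)) := phi_pos h7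
  rw [hdiv, hkey, mul_pow, mul_div_assoc, div_self (by positivity), mul_one]
  rw [hc, ← Real.rpow_natCast (Real.sqrt 7 ^ ((1:ℝ)/2)) 4,
    ← Real.rpow_mul (Real.sqrt_nonneg 7)]
  norm_num
end
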